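/- (Case II with a red nephew, resolution of deficiency) Suppose in a 2-3 red-black tree the node x is the black root of a deficient subtree and its sibling y is black and has a red child. Then performing the appropriate single or double rotation at the common parent of x and y, giving the new root of the rotated subtree the former parent's color and coloring its two children black, yields a subtree with the same inorder traversal in which all red-black properties hold, no node has two red children, and the number of black nodes on every path from its root to an external node equals the number before the deletion; the deficiency is fully resolved. -/

import Mathlib

inductive Color where
  | red : Color
  | black : Color
deriving DecidableEq

inductive RBTree (α : Type) where
  | nil : RBTree α
  | node : Color → RBTree α → α → RBTree α → RBTree α

namespace RBTree

variable {α : Type}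

/-- The color of a tree's root; external (nil) positions count as black. -/
def color : RBTree α → Color
  | .nil => Color.black
  | .node c _ _ _ => c

/-- Inorder traversal of the keys. -/
def inorder : RBTree α → List α
  | .nil => []
  | .node _ l k r => inorder l ++ k :: inorder r

/-- `BH t n`: every path from the root of `t` to an external node contains
exactly `n` black nodes (property (3)). -/
inductive BH : RBTree α → ℕ → Prop where
  | nil : BH RBTree.nil 0
  | red {l r : RBTree α} {k : α} {n : ℕ} :
      BH l n → BH r n → BH (RBTree.node Color.red l k r) n
  | black {l r : RBTree α} {k : α} {n : ℕ} :
      BH l n → BH r n → BH (RBTree.node Color.black l k r) (n + 1)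

/-- Property (2): every red node has black children (equivalently, a red node
never has a red parent). -/
def NoRedRed : RBTree α → Prop
  | .nil => True
  | .node c l _ r =>
      (c = Color.red → color l = Color.black ∧ color r = Color.black) ∧
      NoRedRed l ∧ NoRedRed r

/-- The 2-3 condition: no node has two red children. -/
def No2Red : RBTree α → Prop
  | .nil => True
  | .node _ l _ r =>
      ¬(color l = Color.red ∧ color r = Color.red) ∧ No2Red l ∧ No2Red r

/-- A red-black tree: black root, no red-red violation, uniform black counts. -/
def IsRB (t : RBTree α) : Prop :=
  color t = Color.black ∧ NoRedRed t ∧ ∃ n, BH t n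

/-- A 2-3 red-black tree: a red-black tree where no node has two red children. -/
def Is23RB (t : RBTree α) : Prop := IsRB t ∧ No2Red t

/-- Recolor the root black. -/
def setBlack : RBTree α → RBTree α
  | .nil => .nil
  | .node _ l k r => .node Color.black l k r

/-- `Occurs s t`: `s` occurs as a subtree of `t`. -/
inductive Occurs : RBTree α → RBTree α → Prop where
  | refl (t : RBTree α) : Occurs t t
  | left {s l : RBTree α} (c : Color) (k : α) (r : RBTree α) :
      Occurs s l → Occurs s (RBTree.node c l k r)
  | right {s r : RBTree α} (c : Color) (k : α) (l : RBTree α) :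
      Occurs s r → Occurs s (RBTree.node c l k r)

/-- `Replace s s' t t'`: `t'` is obtained from `t` by replacing one
occurrence of the subtree `s` by `s'`. -/
inductive Replace (s s' : RBTree α) : RBTree α → RBTree α → Prop where
  | here : Replace s s' s s'
  | left {l l' : RBTree α} (c : Color) (k : α) (r : RBTree α) :
      Replace s s' l l' → Replace s s' (RBTree.node c l k r) (RBTree.node c l' k r)
  | right {r r' : RBTree α} (c : Color) (k : α) (l : RBTree α) :
      Replace s s' r r' → Replace s s' (RBTree.node c l k r) (RBTree.node c l k r')

/-- The list of black-node counts along all root-to-external paths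
(in left-to-right order of the external nodes). -/
def bpaths : RBTree α → List ℕ
  | .nil => [0]
  | .node c l _ r =>
      (bpaths l ++ bpaths r).map (fun m => m + if c = Color.black then 1 else 0)

/-- Height: the maximum number of edges on a path from the root to an external node. -/
def height : RBTree α → ℕ
  | .nil => 0
  | .node _ l _ r => max (height l) (height r) + 1

/-- Number of internal nodes. -/
def size : RBTree α → ℕ
  | .nil => 0
  | .node _ l _ r => size l + size r + 1

end RBTree

open RBTree

/-!
Both rotations put the parent's color on a node whose two children are black, and the four
subtrees hanging below those children are `x` together with three subtrees of black-height `n`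
taken from `y` or from its red child. The new black children therefore have black-height `n + 1`,
as `y` had, and the two-red-children condition for them comes either from the 2-3 condition at `y`
(single rotation) or from the red nephew having black children (double rotation).
-/

namespace RBTree

variable {α : Type}

/-- Unlike `Is23RB`, the root may be red and the black-height is recorded. -/
def Is23RBSubtree (t : RBTree α) (n : ℕ) : Prop :=
  NoRedRed t ∧ No2Red t ∧ BH t n

namespace Is23RBSubtree

variable {l r : RBTree α} {k : α} {n : ℕ}

theorem of_node_black (h : Is23RBSubtree (node Color.black l k r) (n + 1)) :
    Is23RBSubtree l n ∧ Is23RBSubtree r n := by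
  obtain ⟨⟨-, hl, hr⟩, ⟨-, hl2, hr2⟩, hbh⟩ := h
  cases hbh with
  | black hlbh hrbh => exact ⟨⟨hl, hl2, hlbh⟩, ⟨hr, hr2, hrbh⟩⟩

theorem of_node_red (h : Is23RBSubtree (node Color.red l k r) n) :
    color l = Color.black ∧ color r = Color.black ∧
      Is23RBSubtree l n ∧ Is23RBSubtree r n := by
  obtain ⟨⟨hc, hl, hr⟩, ⟨-, hl2, hr2⟩, hbh⟩ := h
  cases hbh with
  | red hlbh hrbh => exact ⟨(hc rfl).1, (hc rfl).2, ⟨hl, hl2, hlbh⟩, ⟨hr, hr2, hrbh⟩⟩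

theorem node_black (h2 : ¬(color l = Color.red ∧ color r = Color.red))
    (hl : Is23RBSubtree l n) (hr : Is23RBSubtree r n) :
    Is23RBSubtree (node Color.black l k r) (n + 1) :=
  ⟨⟨nofun, hl.1, hr.1⟩, ⟨h2, hl.2.1, hr.2.1⟩, .black hl.2.2 hr.2.2⟩

theorem node_of_black_children (c : Color) (hlc : color l = Color.black)
    (hrc : color r = Color.black) (hl : Is23RBSubtree l n) (hr : Is23RBSubtree r n) :
    Is23RBSubtree (node c l k r) (n + if c = Color.black then 1 else 0) := by
  refine ⟨⟨fun _ => ⟨hlc, hrc⟩, hl.1, hr.1⟩, ⟨by simp [hlc], hl.2.1, hr.2.1⟩, ?_⟩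
  cases c
  · exact .red hl.2.2 hr.2.2
  · exact .black hl.2.2 hr.2.2

end Is23RBSubtree

end RBTree

theorem caseII_red_nephew_resolves_general
    {α : Type} (cp : Color) (x yl yr : RBTree α) (kp ky : α) (n : ℕ)
    (hxrr : NoRedRed x) (hx2 : No2Red x)
    (hxbh : BH x n)
    (hyrr : NoRedRed (RBTree.node Color.black yl ky yr))
    (hy2 : No2Red (RBTree.node Color.black yl ky yr))
    (hybh : BH (RBTree.node Color.black yl ky yr) (n + 1)) :
    -- far red nephew: single rotation
    (∀ (a : RBTree α) (wk : α) (b : RBTree α), yr = RBTree.node Color.red a wk b →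
      inorder (RBTree.node cp (RBTree.node Color.black x kp yl) ky
                (RBTree.node Color.black a wk b)) =
        inorder (RBTree.node cp x kp (RBTree.node Color.black yl ky yr)) ∧
      NoRedRed (RBTree.node cp (RBTree.node Color.black x kp yl) ky
                (RBTree.node Color.black a wk b)) ∧
      No2Red (RBTree.node cp (RBTree.node Color.black x kp yl) ky
                (RBTree.node Color.black a wk b)) ∧
      BH (RBTree.node cp (RBTree.node Color.black x kp yl) ky
                (RBTree.node Color.black a wk b))
        (n + 1 + if cp = Color.black then 1 else 0)) ∧
    -- near red nephew: double rotation
    (∀ (a : RBTree α) (wk : α) (b : RBTree α), yl = RBTree.node Color.red a wk b →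
      inorder (RBTree.node cp (RBTree.node Color.black x kp a) wk
                (RBTree.node Color.black b ky yr)) =
        inorder (RBTree.node cp x kp (RBTree.node Color.black yl ky yr)) ∧
      NoRedRed (RBTree.node cp (RBTree.node Color.black x kp a) wk
                (RBTree.node Color.black b ky yr)) ∧
      No2Red (RBTree.node cp (RBTree.node Color.black x kp a) wk
                (RBTree.node Color.black b ky yr)) ∧
      BH (RBTree.node cp (RBTree.node Color.black x kp a) wk
                (RBTree.node Color.black b ky yr))
        (n + 1 + if cp = Color.black then 1 else 0)) := by
  have hx : Is23RBSubtree x n := ⟨hxrr, hx2, hxbh⟩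
  have hy : Is23RBSubtree (node Color.black yl ky yr) (n + 1) := ⟨hyrr, hy2, hybh⟩
  obtain ⟨hyl, hyr⟩ := hy.of_node_black
  constructor
  · rintro a wk b rfl
    obtain ⟨hac, -, ha, hb⟩ := hyr.of_node_red
    exact ⟨by simp [inorder], Is23RBSubtree.node_of_black_children cp rfl rfl
      (.node_black (fun h => hy2.1 ⟨h.2, rfl⟩) hx hyl) (.node_black (by simp [hac]) ha hb)⟩
  · rintro a wk b rfl
    obtain ⟨hac, hbc, ha, hb⟩ := hyl.of_node_red
    exact ⟨by simp [inorder], Is23RBSubtree.node_of_black_children cp rfl rfl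
      (.node_black (by simp [hac]) hx ha) (.node_black (by simp [hbc]) hb hyr)⟩

/-- Case II with a red nephew: in a 2-3 red-black tree, `x` is
the black root of a deficient subtree (black-height `n`) and its sibling
`y = node black yl ky yr` is black and has a red child.  Performing the
appropriate single (far red nephew) or double (near red nephew) rotation at
the common parent `p = node cp x kp y`, giving the new root of the rotated
subtree the former parent's color `cp` and coloring its two children black,
yields a subtree with the same inorder traversal in which all red-black
properties hold, no node has two red children, and the number of black nodes
on every path from its root to an external node equals the number before the
deletion, namely `n + 1` plus one if `cp` is black; the deficiency is fully
resolved. -/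
theorem caseII_red_nephew_resolves
    {α : Type} (cp : Color) (x yl yr : RBTree α) (kp ky : α) (n : ℕ)
    (hxc : color x = Color.black) (hxrr : NoRedRed x) (hx2 : No2Red x)
    (hxbh : BH x n)
    (hyrr : NoRedRed (RBTree.node Color.black yl ky yr))
    (hy2 : No2Red (RBTree.node Color.black yl ky yr))
    (hybh : BH (RBTree.node Color.black yl ky yr) (n + 1))
    (hred : color yl = Color.red ∨ color yr = Color.red) :
    -- far red nephew: single rotation
    (∀ (a : RBTree α) (wk : α) (b : RBTree α), yr = RBTree.node Color.red a wk b →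
      inorder (RBTree.node cp (RBTree.node Color.black x kp yl) ky
                (RBTree.node Color.black a wk b)) =
        inorder (RBTree.node cp x kp (RBTree.node Color.black yl ky yr)) ∧
      NoRedRed (RBTree.node cp (RBTree.node Color.black x kp yl) ky
                (RBTree.node Color.black a wk b)) ∧
      No2Red (RBTree.node cp (RBTree.node Color.black x kp yl) ky
                (RBTree.node Color.black a wk b)) ∧
      BH (RBTree.node cp (RBTree.node Color.black x kp yl) ky
                (RBTree.node Color.black a wk b))
        (n + 1 + if cp = Color.black then 1 else 0)) ∧
    -- near red nephew: double rotation
    (∀ (a : RBTree α) (wk : α) (b : RBTree α), yl = RBTree.node Color.red a wk b →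
      inorder (RBTree.node cp (RBTree.node Color.black x kp a) wk
                (RBTree.node Color.black b ky yr)) =
        inorder (RBTree.node cp x kp (RBTree.node Color.black yl ky yr)) ∧
      NoRedRed (RBTree.node cp (RBTree.node Color.black x kp a) wk
                (RBTree.node Color.black b ky yr)) ∧
      No2Red (RBTree.node cp (RBTree.node Color.black x kp a) wk
                (RBTree.node Color.black b ky yr)) ∧
      BH (RBTree.node cp (RBTree.node Color.black x kp a) wk
                (RBTree.node Color.black b ky yr))
        (n + 1 + if cp = Color.black then 1 else 0)) :=
  caseII_red_nephew_resolves_general cp x yl yr kp ky n hxrr hx2 hxbh hyrr hy2 hybh
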